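/- arXiv:1404.1149 — 2 statements merged into one kernel-verified Lean document; each statement's English description precedes it below -/
import Mathlib

section
/- Let g be a restricted Lie algebra over a field of characteristic p > 0 and let b be a solvable Lie subalgebra of g. Then the restricted subalgebra of g generated by b (the smallest Lie subalgebra containing b and closed under the p-operation) is solvable. -/
/-!
Since `ι` embeds `L` into an associative algebra of characteristic `p`, the `p`-operation satisfies
`ad (x^[p]) = (ad x)^p`. Hence for submodules `C ⊆ D` the Lie subalgebra `{y | ⁅y, D⁆ ⊆ C}` is
closed under the `p`-operation, so it contains the restricted closure `P` of `b` as soon as it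
contains `b`. With `C = D = b` this shows that `P` normalizes `b`; then `C = b`, `D = P` gives
`⁅P, P⁆ ⊆ b`. The derived algebra of `P` therefore embeds into the solvable `b`, and `P` is solvable.
-/

attribute [local instance 100] LieRing.ofAssociativeRing

open LieAlgebra

section

variable {R L L' : Type*} [CommRing R] [LieRing L] [LieAlgebra R L] [LieRing L'] [LieAlgebra R L']

lemma LieHom.map_ad_pow_apply (f : L →ₗ⁅R⁆ L') (x y : L) (n : ℕ) :
    f ((ad R L x ^ n) y) = (ad R L' (f x) ^ n) (f y) := by
  induction n with
  | zero => rfl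
  | succ n ih => simp only [pow_succ', Module.End.mul_apply, ad_apply, LieHom.map_lie, ih]

def LieHom.codRestrict (f : L' →ₗ⁅R⁆ L) (K : LieSubalgebra R L) (h : ∀ x, f x ∈ K) :
    L' →ₗ⁅R⁆ K :=
  { (f : L' →ₗ[R] L).codRestrict K.toSubmodule h with
    map_lie' := fun {x y} => Subtype.ext (f.map_lie x y) }

lemma LieHom.injective_codRestrict {f : L' →ₗ⁅R⁆ L} (hf : Function.Injective f)
    (K : LieSubalgebra R L) (h : ∀ x, f x ∈ K) : Function.Injective (f.codRestrict K h) :=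
  fun _ _ hxy => hf (congrArg Subtype.val hxy)

theorem LieAlgebra.isSolvable_of_isSolvable_derivedSeries_one
    [IsSolvable (derivedSeries R L 1)] : IsSolvable L := by
  obtain ⟨n, hn⟩ := IsSolvable.solvable (R := R) (L := derivedSeries R L 1)
  rw [LieIdeal.derivedSeries_eq_bot_iff] at hn
  refine (isSolvable_iff R L).mpr ⟨n + 1, ?_⟩
  rwa [derivedSeries_def, derivedSeriesOfIdeal_add]

end

section

variable {p : ℕ} [Fact p.Prime] {k : Type*} [Field k] [CharP k p]

lemma LieAlgebra.ad_pow_char {A : Type*} [Ring A] [Algebra k A] (a : A) :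
    ad k A a ^ p = ad k A (a ^ p) := by
  rcases subsingleton_or_nontrivial A with hA | hA
  · exact Subsingleton.elim _ _
  have := charP_of_injective_algebraMap' k (A := Module.End k A) p
  simp only [ad_eq_lmul_left_sub_lmul_right, Pi.sub_apply]
  rw [sub_pow_char_of_commute _ (LinearMap.commute_mulLeft_right a a), LinearMap.pow_mulLeft,
    LinearMap.pow_mulRight]

lemma LieAlgebra.ad_eq_ad_pow_char_of_injective {L A : Type*} [LieRing L] [LieAlgebra k L]
    [Ring A] [Algebra k A] {ι : L →ₗ⁅k⁆ A} (hι : Function.Injective ι) {x y : L}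
    (h : ι y = ι x ^ p) : ad k L y = ad k L x ^ p := by
  ext z
  apply hι
  rw [ι.map_ad_pow_apply, ad_apply, ι.map_lie, h, ad_pow_char, ad_apply]

end

namespace LieSubalgebra

variable {R L : Type*} [CommRing R] [LieRing L] [LieAlgebra R L]

def colon (C : Submodule R L) (D : Set L) (hCD : (C : Set L) ⊆ D) : LieSubalgebra R L where
  carrier := {y | ∀ d ∈ D, ⁅y, d⁆ ∈ C}
  add_mem' h₁ h₂ d hd := by rw [add_lie]; exact C.add_mem (h₁ d hd) (h₂ d hd)
  zero_mem' d _ := by simp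
  smul_mem' t _ h d hd := by rw [smul_lie]; exact C.smul_mem t (h d hd)
  lie_mem' h₁ h₂ d hd := by
    rw [lie_lie]
    exact C.sub_mem (h₁ _ (hCD (h₂ d hd))) (h₂ _ (hCD (h₁ d hd)))

lemma mem_colon_of_ad_eq_ad_pow {C : Submodule R L} {D : Set L} {hCD : (C : Set L) ⊆ D}
    {x y : L} {n : ℕ} (hn : n ≠ 0) (h : ad R L y = ad R L x ^ n) (hx : x ∈ colon C D hCD) :
    y ∈ colon C D hCD := by
  intro d hd
  obtain ⟨m, rfl⟩ := Nat.exists_eq_succ_of_ne_zero hn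
  rw [← ad_apply (R := R), h, pow_succ, Module.End.mul_apply]
  exact Module.End.pow_apply_mem_of_forall_mem m (fun c hc => hx c (hCD hc)) _ (hx d hd)

def stableClosure (f : L → L) (b : LieSubalgebra R L) : LieSubalgebra R L :=
  sInf {S | b ≤ S ∧ ∀ x ∈ S, f x ∈ S}

variable {f : L → L} {b : LieSubalgebra R L}

lemma le_stableClosure : b ≤ stableClosure f b := le_sInf fun _ hS => hS.1

lemma stableClosure_le {S : LieSubalgebra R L} (hbS : b ≤ S) (hS : ∀ x ∈ S, f x ∈ S) :
    stableClosure f b ≤ S :=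
  sInf_le ⟨hbS, hS⟩

theorem lie_mem_of_mem_stableClosure {n : ℕ} (hn : n ≠ 0) (hf : ∀ x, ad R L (f x) = ad R L x ^ n)
    {x y : L} (hx : x ∈ stableClosure f b) (hy : y ∈ stableClosure f b) : ⁅x, y⁆ ∈ b := by
  have hnorm : stableClosure f b ≤ colon b.toSubmodule b subset_rfl :=
    stableClosure_le (fun _ hy _ hd => b.lie_mem hy hd)
      fun x hx => mem_colon_of_ad_eq_ad_pow hn (hf x) hx
  have hcent : stableClosure f b ≤ colon b.toSubmodule (stableClosure f b) le_stableClosure := by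
    refine stableClosure_le (fun y hy d hd => ?_) fun x hx => mem_colon_of_ad_eq_ad_pow hn (hf x) hx
    rw [← lie_skew]
    exact b.neg_mem (hnorm hd y hy)
  exact hcent hx y hy

theorem isSolvable_of_forall_lie_mem {b P : LieSubalgebra R L} [IsSolvable b]
    (h : ∀ x ∈ P, ∀ y ∈ P, ⁅x, y⁆ ∈ b) : IsSolvable P := by
  have hderived : ∀ z ∈ derivedSeries R P 1, (z : L) ∈ b := by
    intro z hz
    replace hz : z ∈ ((derivedSeries R P 1 : LieSubalgebra R P) : Submodule R P) := hz
    rw [coe_derivedSeries_one_eq] at hz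
    induction hz using Submodule.span_induction with
    | mem _ hw => obtain ⟨x, y, rfl⟩ := hw; exact h x x.2 y y.2
    | zero => exact b.zero_mem
    | add _ _ _ _ h₁ h₂ => exact b.add_mem h₁ h₂
    | smul t _ _ h => exact b.smul_mem t h
  have : IsSolvable (derivedSeries R P 1) :=
    (LieHom.injective_codRestrict (f := P.incl.comp (derivedSeries R P 1).incl)
      (Subtype.val_injective.comp (LieIdeal.incl_injective _)) b
      fun z => hderived z z.2).lieAlgebra_isSolvable
  exact isSolvable_of_isSolvable_derivedSeries_one (R := R)

end LieSubalgebra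

/-- in a restricted Lie algebra `(g, [p])` over a field of
characteristic `p > 0`, the restricted subalgebra generated by a solvable Lie
subalgebra `b` (the smallest Lie subalgebra containing `b` and closed under
the `p`-operation, here realized as the infimum of all such subalgebras) is
solvable.  The restricted structure is encoded via Jacobson's
characterization: the `p`-operation `pOp` is realized as the associative
`p`-th power under a faithful embedding `ι` into an associative algebra. -/
theorem pClosure_of_solvable_isSolvable
    {p : ℕ} [Fact p.Prime] {k : Type*} [Field k] [CharP k p]
    {L : Type*} [LieRing L] [LieAlgebra k L]
    (pOp : L → L)
    (A : Type*) [Ring A] [Algebra k A]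
    (ι : L →ₗ⁅k⁆ A) (hι : Function.Injective ι)
    (hp : ∀ x : L, ι (pOp x) = ι x ^ p)
    (b : LieSubalgebra k L) (hb : LieAlgebra.IsSolvable b) :
    LieAlgebra.IsSolvable
      ↥(sInf {S : LieSubalgebra k L | b ≤ S ∧ ∀ x ∈ S, pOp x ∈ S}) :=
  LieSubalgebra.isSolvable_of_forall_lie_mem fun _ hx _ hy =>
    LieSubalgebra.lie_mem_of_mem_stableClosure (Fact.out : p.Prime).ne_zero
      (fun x => ad_eq_ad_pow_char_of_injective hι (hp x)) hx hy
end

section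
/- Let k be an algebraically closed field of characteristic p > 3, and W(1) = Der_k(k[X]/(X^p)). Then W(1)_0 = span{x∂, x^2∂, ..., x^{p−1}∂} is a maximal solvable Lie subalgebra of W(1): it is solvable and any solvable subalgebra of W(1) properly containing it does not exist. -/
open Polynomial

set_option synthInstance.maxHeartbeats 1000000
set_option maxHeartbeats 1000000

/-- The truncated polynomial algebra `A(1) = k[X]/(X^p)`. -/
noncomputable abbrev TruncPolyAlg (k : Type*) [Field k] (p : ℕ) :=
  Polynomial k ⧸ Ideal.span {(X : Polynomial k) ^ p}

/-- The image of `X` in `A(1) = k[X]/(X^p)`. -/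
noncomputable abbrev truncX (k : Type*) [Field k] (p : ℕ) : TruncPolyAlg k p :=
  Ideal.Quotient.mk _ (X : Polynomial k)

/-!
Every derivation of `A = k[X]/(X^p)` is `D = D x • ∂`, where `∂` is induced by `d/dX`, so
`⁅D, E⁆ x = D x * ∂ (E x) - E x * ∂ (D x)`. If `u` divides both `D x` and `E x`, then `u ^ 2`
divides `⁅D, E⁆ x`. Hence the subalgebras `W_n = {D | x ^ (n + 1) ∣ D x}` satisfy
`⁅W_n, W_n⁆ ⊆ W_(n+1)`, and `W_p = 0` because `x ^ p = 0`: so `W_0` is solvable.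

A subalgebra strictly larger than `W_0` contains some `D` with `D x` of nonzero constant term,
hence contains `∂`; together with `x • ∂, x ^ 2 • ∂ ∈ W_0` it contains the `sl₂`-triple
`(-2x • ∂, ∂, -x ^ 2 • ∂)`. As `2 ≠ 0` in `k`, such a triple lies in every term of the derived
series, which therefore never vanishes.
-/

namespace LieAlgebra

variable {R L : Type*} [CommRing R] [LieRing L] [LieAlgebra R L]

theorem derivedSeries_le_of_lie_mem_succ (F : ℕ → Submodule R L) (h0 : F 0 = ⊤)
    (hlie : ∀ n, ∀ x ∈ F n, ∀ y ∈ F n, ⁅x, y⁆ ∈ F (n + 1)) (n : ℕ) :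
    (derivedSeries R L n).toSubmodule ≤ F n := by
  induction n with
  | zero => simp [h0]
  | succ n ih =>
    rw [derivedSeries_def, derivedSeriesOfIdeal_succ, ← derivedSeries_def,
      LieSubmodule.lieIdeal_oper_eq_linear_span', Submodule.span_le]
    rintro _ ⟨x, hx, y, hy, rfl⟩
    exact hlie n x (ih hx) y (ih hy)

theorem isSolvable_of_lie_mem_succ (F : ℕ → Submodule R L) (h0 : F 0 = ⊤)
    (hlie : ∀ n, ∀ x ∈ F n, ∀ y ∈ F n, ⁅x, y⁆ ∈ F (n + 1)) {N : ℕ} (hN : F N = ⊥) :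
    IsSolvable L := by
  refine (isSolvable_iff R L).mpr ⟨N, ?_⟩
  rw [← LieSubmodule.toSubmodule_eq_bot, eq_bot_iff, ← hN]
  exact derivedSeries_le_of_lie_mem_succ F h0 hlie N

end LieAlgebra

namespace IsSl2Triple

variable {K L : Type*} [Field K] [LieRing L] [LieAlgebra K L] {h e f : L}

theorem mem_derivedSeries (h2 : (2 : K) ≠ 0) (t : IsSl2Triple h e f) (n : ℕ) :
    h ∈ LieAlgebra.derivedSeries K L n ∧ e ∈ LieAlgebra.derivedSeries K L n ∧
      f ∈ LieAlgebra.derivedSeries K L n := by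
  induction n with
  | zero => simp
  | succ n ih =>
    obtain ⟨hh, he, hf⟩ := ih
    rw [LieAlgebra.derivedSeries_def, LieAlgebra.derivedSeriesOfIdeal_succ,
      ← LieAlgebra.derivedSeries_def]
    have he' : e = (2 : K)⁻¹ • ⁅h, e⁆ := by rw [t.lie_h_e_smul K, inv_smul_smul₀ h2]
    have hf' : f = -(2 : K)⁻¹ • ⁅h, f⁆ := by
      rw [t.lie_lie_smul_f K, neg_smul, smul_neg, neg_neg, inv_smul_smul₀ h2]
    refine ⟨t.lie_e_f ▸ LieSubmodule.lie_mem_lie he hf, ?_, ?_⟩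
    · rw [he']; exact Submodule.smul_mem _ _ (LieSubmodule.lie_mem_lie hh he)
    · rw [hf']; exact Submodule.smul_mem _ _ (LieSubmodule.lie_mem_lie hh hf)

theorem not_isSolvable (h2 : (2 : K) ≠ 0) (t : IsSl2Triple h e f) :
    ¬ LieAlgebra.IsSolvable L := by
  rintro hL
  obtain ⟨n, hn⟩ := (LieAlgebra.isSolvable_iff K L).mp hL
  have := (t.mem_derivedSeries h2 n).1
  rw [hn, LieSubmodule.mem_bot] at this
  exact t.h_ne_zero this

theorem not_isSolvable_of_mem (h2 : (2 : K) ≠ 0) (t : IsSl2Triple h e f) {C : LieSubalgebra K L}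
    (hh : h ∈ C) (he : e ∈ C) (hf : f ∈ C) : ¬ LieAlgebra.IsSolvable C :=
  IsSl2Triple.not_isSolvable (h := (⟨h, hh⟩ : C)) (e := ⟨e, he⟩) (f := ⟨f, hf⟩) h2
    ⟨fun h0 => t.h_ne_zero (congrArg Subtype.val h0), Subtype.ext t.lie_e_f,
      Subtype.ext t.lie_h_e_nsmul, Subtype.ext t.lie_h_f_nsmul⟩

end IsSl2Triple

namespace TruncPolyAlg

variable {k : Type*} [Field k] {p : ℕ}

theorem truncX_pow_self : truncX k p ^ p = 0 := by
  rw [← map_pow, Ideal.Quotient.eq_zero_iff_mem]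
  exact Ideal.subset_span rfl

theorem truncX_ne_zero (hp : 1 < p) : truncX k p ≠ 0 := by
  intro h
  rw [Ideal.Quotient.eq_zero_iff_mem, Ideal.mem_span_singleton] at h
  have := (pow_dvd_pow_iff (n := p) (m := 1) X_ne_zero (not_isUnit_X (R := k))).mp
    (by rwa [pow_one])
  omega

theorem exists_eq_algebraMap_add_truncX_mul (a : TruncPolyAlg k p) :
    ∃ c : k, ∃ r, a = algebraMap k _ c + truncX k p * r := by
  obtain ⟨f, rfl⟩ := Ideal.Quotient.mk_surjective a
  refine ⟨f.coeff 0, Ideal.Quotient.mk _ f.divX, ?_⟩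
  conv_lhs => rw [← X_mul_divX_add f]
  rw [map_add, map_mul, add_comm]
  rfl

theorem truncX_mul_mem_span (a : TruncPolyAlg k p) :
    truncX k p * a ∈ Submodule.span k (Set.range fun i : ℕ => truncX k p ^ (i + 1)) := by
  obtain ⟨f, rfl⟩ := Ideal.Quotient.mk_surjective a
  rw [← aeval_X_left_apply f, ← Ideal.Quotient.mkₐ_eq_mk k, ← aeval_algHom_apply,
    aeval_eq_sum_range, Finset.mul_sum]
  refine Submodule.sum_mem _ fun i _ => ?_
  rw [mul_smul_comm]
  exact Submodule.smul_mem _ _ (Submodule.subset_span ⟨i, pow_succ' _ _⟩)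

theorem adjoin_truncX : Algebra.adjoin k {truncX k p} = ⊤ := by
  change Algebra.adjoin k {Ideal.Quotient.mk _ X} = ⊤
  rw [← Ideal.Quotient.mkₐ_eq_mk k,
    ← Set.image_singleton (f := Ideal.Quotient.mkₐ k (Ideal.span {X ^ p})),
    ← AlgHom.map_adjoin, adjoin_X, Algebra.map_top, AlgHom.range_eq_top]
  exact Ideal.Quotient.mkₐ_surjective k _

theorem derivation_ext {M : Type*} [AddCommMonoid M] [Module (TruncPolyAlg k p) M] [Module k M]
    [IsScalarTower k (TruncPolyAlg k p) M] {D E : Derivation k (TruncPolyAlg k p) M}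
    (h : D (truncX k p) = E (truncX k p)) : D = E :=
  Derivation.ext_of_adjoin_eq_top _ adjoin_truncX (Set.eqOn_singleton.mpr h)

variable [CharP k p]

theorem derivative_mem_span_X_pow {f : k[X]} (hf : f ∈ Ideal.span {(X : k[X]) ^ p}) :
    derivative f ∈ Ideal.span {(X : k[X]) ^ p} := by
  obtain ⟨g, rfl⟩ := Ideal.mem_span_singleton.mp hf
  rw [derivative_mul, derivative_X_pow, CharP.cast_eq_zero, C_0, zero_mul, zero_mul, zero_add]
  exact Ideal.mul_mem_right _ _ (Ideal.mem_span_singleton_self _)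

variable (k p) in
noncomputable def derivX : Derivation k (TruncPolyAlg k p) (TruncPolyAlg k p) :=
  Derivation.liftOfSurjective (Ideal.Quotient.mkₐ_surjective k _) (d := derivative')
    fun _ hf => Ideal.Quotient.eq_zero_iff_mem.mpr
      (derivative_mem_span_X_pow (Ideal.Quotient.eq_zero_iff_mem.mp hf))

theorem derivX_mk (f : k[X]) :
    derivX k p (Ideal.Quotient.mk _ f) = Ideal.Quotient.mk _ (derivative f) := by
  unfold derivX
  exact Derivation.liftOfSurjective_apply _ _ f

@[simp]
theorem derivX_truncX : derivX k p (truncX k p) = 1 := by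
  rw [derivX_mk, derivative_X, map_one]

theorem eq_smul_derivX (D : Derivation k (TruncPolyAlg k p) (TruncPolyAlg k p)) :
    D = D (truncX k p) • derivX k p :=
  derivation_ext (by simp)

theorem apply_eq_mul_derivX (D : Derivation k (TruncPolyAlg k p) (TruncPolyAlg k p))
    (a : TruncPolyAlg k p) : D a = D (truncX k p) * derivX k p a := by
  conv_lhs => rw [eq_smul_derivX D]
  rfl

theorem lie_apply_truncX (D E : Derivation k (TruncPolyAlg k p) (TruncPolyAlg k p)) :
    ⁅D, E⁆ (truncX k p) =
      D (truncX k p) * derivX k p (E (truncX k p)) -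
        E (truncX k p) * derivX k p (D (truncX k p)) := by
  rw [Derivation.commutator_apply, apply_eq_mul_derivX D (E (truncX k p)),
    apply_eq_mul_derivX E (D (truncX k p))]

theorem sq_dvd_lie_apply_truncX {u : TruncPolyAlg k p}
    {D E : Derivation k (TruncPolyAlg k p) (TruncPolyAlg k p)}
    (hD : u ∣ D (truncX k p)) (hE : u ∣ E (truncX k p)) : u ^ 2 ∣ ⁅D, E⁆ (truncX k p) := by
  obtain ⟨a, ha⟩ := hD
  obtain ⟨b, hb⟩ := hE
  rw [lie_apply_truncX, ha, hb, Derivation.leibniz, Derivation.leibniz]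
  exact ⟨a * derivX k p b - b * derivX k p a, by simp only [smul_eq_mul]; ring⟩

variable (k p) in
noncomputable def filtration (n : ℕ) :
    LieSubalgebra k (Derivation k (TruncPolyAlg k p) (TruncPolyAlg k p)) where
  carrier := {D | truncX k p ^ (n + 1) ∣ D (truncX k p)}
  add_mem' := dvd_add
  zero_mem' := dvd_zero _
  smul_mem' c _ hD := by simpa [Algebra.smul_def] using hD.mul_left _
  lie_mem' hD hE := (dvd_pow_self _ two_ne_zero).trans (sq_dvd_lie_apply_truncX hD hE)

theorem mem_filtration {n : ℕ} {D : Derivation k (TruncPolyAlg k p) (TruncPolyAlg k p)} :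
    D ∈ filtration k p n ↔ truncX k p ^ (n + 1) ∣ D (truncX k p) :=
  Iff.rfl

theorem smul_derivX_mem_filtration {n : ℕ} {a : TruncPolyAlg k p} :
    a • derivX k p ∈ filtration k p n ↔ truncX k p ^ (n + 1) ∣ a := by
  simp [mem_filtration]

theorem lie_mem_filtration_succ {n : ℕ}
    {D E : Derivation k (TruncPolyAlg k p) (TruncPolyAlg k p)} (hD : D ∈ filtration k p n)
    (hE : E ∈ filtration k p n) : ⁅D, E⁆ ∈ filtration k p (n + 1) :=
  (pow_dvd_pow _ (by omega : n + 1 + 1 ≤ (n + 1) * 2)).trans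
    (by simpa [← pow_mul] using sq_dvd_lie_apply_truncX hD hE)

theorem eq_zero_of_mem_filtration_self {D : Derivation k (TruncPolyAlg k p) (TruncPolyAlg k p)}
    (hD : D ∈ filtration k p p) : D = 0 := by
  rw [mem_filtration, pow_succ, truncX_pow_self, zero_mul, zero_dvd_iff] at hD
  exact derivation_ext (by simp [hD])

theorem isSolvable_filtration_zero : LieAlgebra.IsSolvable (filtration k p 0) := by
  let F n := (filtration k p n).toSubmodule.comap
    ((filtration k p 0).incl : filtration k p 0 →ₗ[k] _)
  refine LieAlgebra.isSolvable_of_lie_mem_succ F ?_ (fun n x hx y hy => ?_) (N := p) ?_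
  · exact eq_top_iff.mpr fun x _ => x.2
  · exact lie_mem_filtration_succ hx hy
  · exact eq_bot_iff.mpr fun x hx => Subtype.ext (eq_zero_of_mem_filtration_self hx)

theorem filtration_zero_toSubmodule : (filtration k p 0).toSubmodule = Submodule.span k
    {D | ∃ i : ℕ, 1 ≤ i ∧ i ≤ p - 1 ∧ D (truncX k p) = truncX k p ^ i} := by
  set S := Submodule.span k
    {D : Derivation k (TruncPolyAlg k p) (TruncPolyAlg k p) |
      ∃ i : ℕ, 1 ≤ i ∧ i ≤ p - 1 ∧ D (truncX k p) = truncX k p ^ i}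
  refine le_antisymm (fun D hD => ?_) (Submodule.span_le.mpr ?_)
  · let Φ := (LinearMap.toSpanSingleton (TruncPolyAlg k p) _ (derivX k p)).restrictScalars k
    have hspan : Submodule.span k (Set.range fun i : ℕ => truncX k p ^ (i + 1)) ≤ S.comap Φ := by
      refine Submodule.span_le.mpr (Set.range_subset_iff.mpr fun i => ?_)
      by_cases hi : i + 1 ≤ p - 1
      · exact Submodule.subset_span ⟨i + 1, by omega, hi, by simp [Φ]⟩
      · simp [Φ, pow_eq_zero_of_le (by omega : p ≤ i + 1) truncX_pow_self]
    obtain ⟨r, hr⟩ := (mem_filtration (n := 0)).mp hD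
    rw [eq_smul_derivX D, hr, zero_add, pow_one]
    exact hspan (truncX_mul_mem_span r)
  · rintro D ⟨i, hi, -, hD⟩
    rw [SetLike.mem_coe, LieSubalgebra.mem_toSubmodule, mem_filtration, hD]
    exact pow_dvd_pow _ hi

theorem derivX_mem_of_filtration_zero_lt
    {C : LieSubalgebra k (Derivation k (TruncPolyAlg k p) (TruncPolyAlg k p))}
    (hC : filtration k p 0 < C) : derivX k p ∈ C := by
  obtain ⟨D, hDC, hDB⟩ := SetLike.exists_of_lt hC
  obtain ⟨c, r, hcr⟩ := exists_eq_algebraMap_add_truncX_mul (D (truncX k p))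
  have hc : c ≠ 0 := by
    rintro rfl
    exact hDB (mem_filtration.mpr (by simp [hcr]))
  have hr : (truncX k p * r) • derivX k p ∈ C :=
    hC.le (smul_derivX_mem_filtration.mpr (by simp))
  have hcD : c • derivX k p = D - (truncX k p * r) • derivX k p := by
    rw [eq_smul_derivX D, hcr, add_smul, algebraMap_smul]
    abel
  have := C.smul_mem c⁻¹ (hcD ▸ sub_mem hDC hr)
  rwa [inv_smul_smul₀ hc] at this

theorem isSl2Triple (h2 : (2 : k) ≠ 0) (hp : 1 < p) :
    IsSl2Triple ((-2 * truncX k p) • derivX k p) (derivX k p)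
      ((-truncX k p ^ 2) • derivX k p) := by
  have hd2 : derivX k p 2 = 0 := by exact_mod_cast (derivX k p).map_natCast 2
  refine ⟨fun h => ?_, derivation_ext ?_, derivation_ext ?_, derivation_ext ?_⟩
  · have h2A : IsUnit (-2 : TruncPolyAlg k p) := by
      rw [← map_ofNat (algebraMap k _) 2, ← map_neg]
      exact (Ne.isUnit (neg_ne_zero.mpr h2)).map _
    have := congrArg (· (truncX k p)) h
    simp only [Derivation.smul_apply, derivX_truncX, smul_eq_mul, mul_one,
      Derivation.zero_apply, h2A.mul_right_eq_zero] at this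
    exact truncX_ne_zero hp this
  · simp [lie_apply_truncX]; ring
  · simp [lie_apply_truncX, hd2]
  · simp [lie_apply_truncX, hd2]; ring

end TruncPolyAlg

theorem witt_W0_maximal_solvable_general
    {p : ℕ} (hp : 3 < p)
    {k : Type*} [Field k] [CharP k p] :
    ∃ B : LieSubalgebra k (Derivation k (TruncPolyAlg k p) (TruncPolyAlg k p)),
      B.toSubmodule = Submodule.span k
        {D : Derivation k (TruncPolyAlg k p) (TruncPolyAlg k p) |
          ∃ i : ℕ, 1 ≤ i ∧ i ≤ p - 1 ∧ D (truncX k p) = truncX k p ^ i} ∧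
      LieAlgebra.IsSolvable B ∧
      ¬ ∃ C : LieSubalgebra k (Derivation k (TruncPolyAlg k p) (TruncPolyAlg k p)),
          LieAlgebra.IsSolvable C ∧ B < C := by
  open TruncPolyAlg in
  refine ⟨filtration k p 0, filtration_zero_toSubmodule, isSolvable_filtration_zero, ?_⟩
  rintro ⟨C, hC, hlt⟩
  have h2 : (2 : k) ≠ 0 := by
    exact_mod_cast (CharP.cast_eq_zero_iff k p 2).not.mpr
      (Nat.not_dvd_of_pos_of_lt two_pos (by omega))
  refine (isSl2Triple h2 (by omega)).not_isSolvable_of_mem h2 (hlt.le ?_)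
    (derivX_mem_of_filtration_zero_lt hlt) (hlt.le ?_) hC
  · exact smul_derivX_mem_filtration.mpr ⟨-2, by ring⟩
  · exact smul_derivX_mem_filtration.mpr ⟨-truncX k p, by ring⟩

/-- for `k` algebraically closed of characteristic `p > 3`,
`W(1)₀ = span{x∂, x²∂, …, x^{p-1}∂}` is a maximal solvable Lie subalgebra of
`W(1) = Der_k(k[X]/(X^p))`: it is a solvable Lie subalgebra and there exists
no solvable Lie subalgebra properly containing it. -/
theorem witt_W0_maximal_solvable
    {p : ℕ} [Fact p.Prime] (hp : 3 < p)
    {k : Type*} [Field k] [IsAlgClosed k] [CharP k p] :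
    ∃ B : LieSubalgebra k (Derivation k (TruncPolyAlg k p) (TruncPolyAlg k p)),
      B.toSubmodule = Submodule.span k
        {D : Derivation k (TruncPolyAlg k p) (TruncPolyAlg k p) |
          ∃ i : ℕ, 1 ≤ i ∧ i ≤ p - 1 ∧ D (truncX k p) = truncX k p ^ i} ∧
      LieAlgebra.IsSolvable B ∧
      ¬ ∃ C : LieSubalgebra k (Derivation k (TruncPolyAlg k p) (TruncPolyAlg k p)),
          LieAlgebra.IsSolvable C ∧ B < C :=
  witt_W0_maximal_solvable_general hp
end
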